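/- For θ ∈ (-π/2, π/2), θ ≠ 0, the L²-norm squared of the vector φ_n^{(θ)} equals (1/√(cos θ)) P_n(1/cos θ), where P_n is the n-th Legendre polynomial; i.e. ∫_ℝ |φ_n^{(θ)}(x)|² dx = P_n(1/cos θ)/√(cos θ), with φ_n^{(θ)}(x) = ((Ω/π)^{1/4} e^{iθ/4}/√(2ⁿ n!)) H_n(e^{iθ/2}√Ω x) e^{-(1/2)Ω e^{iθ} x²}. -/

import Mathlib

open MeasureTheory Complex Filter

noncomputable section

/-- The pseudo-bosonic annihilation operator `A_θ`. -/
def Aop (Ω θ : ℝ) (f : ℝ → ℂ) : ℝ → ℂ := fun x =>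
  ((Real.sqrt (2 * Ω))⁻¹ : ℂ) *
    (Complex.exp (Complex.I * θ / 2) * Ω * x * f x
      + Complex.exp (-(Complex.I * θ / 2)) * deriv f x)

/-- The pseudo-bosonic creation operator `B_θ`. -/
def Bop (Ω θ : ℝ) (f : ℝ → ℂ) : ℝ → ℂ := fun x =>
  ((Real.sqrt (2 * Ω))⁻¹ : ℂ) *
    (Complex.exp (Complex.I * θ / 2) * Ω * x * f x
      - Complex.exp (-(Complex.I * θ / 2)) * deriv f x)

/-- Physicists' Hermite polynomials, via `H_{n+1}(y) = 2y H_n(y) - H_n'(y)`. -/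
def physHermite : ℕ → Polynomial ℤ
  | 0 => 1
  | n + 1 => 2 * Polynomial.X * physHermite n - Polynomial.derivative (physHermite n)

/-- The eigenfunctions `φ_n^{(θ)}` (with a general normalization constant `N`). -/
def phiN (Ω θ : ℝ) (N : ℂ) (n : ℕ) : ℝ → ℂ := fun x =>
  N / Real.sqrt (2 ^ n * n.factorial) *
    Polynomial.aeval (Complex.exp (Complex.I * θ / 2) * Real.sqrt Ω * x) (physHermite n) *
    Complex.exp (-(1/2) * Ω * Complex.exp (Complex.I * θ) * x ^ 2)

/-- Legendre polynomials via the Rodrigues formula. -/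
def legendreP (n : ℕ) : Polynomial ℝ :=
  Polynomial.C ((2 ^ n * n.factorial : ℝ)⁻¹) *
    (Polynomial.derivative^[n] ((Polynomial.X ^ 2 - 1) ^ n))

open Polynomial

lemma physHermite_succ (n : ℕ) : physHermite (n+1) =
    2 * X * physHermite n - derivative (physHermite n) := rfl

lemma derivative_physHermite (n : ℕ) :
    derivative (physHermite n) = 2 * (n : ℤ[X]) * physHermite (n-1) := by
  induction n with
  | zero => simp [physHermite]
  | succ n ih =>
    cases n with
    | zero => simp [physHermite]
    | succ m =>
      rw [physHermite_succ (m+1), derivative_sub, ih]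
      simp only [Nat.add_sub_cancel]
      rw [derivative_mul, ih]
      simp only [Nat.add_sub_cancel]
      rw [physHermite_succ m]
      simp only [derivative_mul, derivative_X, derivative_ofNat, derivative_natCast]
      push_cast
      ring

/-- complex Hermite polynomials -/
def Hc (n : ℕ) : Polynomial ℂ := (physHermite n).map (Int.castRingHom ℂ)

lemma Hc_zero : Hc 0 = 1 := by simp [Hc, physHermite]

lemma derivative_Hc (n : ℕ) : derivative (Hc n) = 2 * (n : ℂ[X]) * Hc (n-1) := by
  rw [Hc, Polynomial.derivative_map, derivative_physHermite]
  simp only [Polynomial.map_mul, Polynomial.map_ofNat, Polynomial.map_natCast]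
  rfl

lemma Hc_succ (n : ℕ) : Hc (n+1) = 2 * X * Hc n - 2 * (n : ℂ[X]) * Hc (n-1) := by
  unfold Hc
  rw [physHermite_succ, derivative_physHermite]
  simp only [Polynomial.map_sub, Polynomial.map_mul, Polynomial.map_ofNat, Polynomial.map_X,
    Polynomial.map_natCast]

/-- scaled Hermite -/
def HH (γ : ℂ) (n : ℕ) : Polynomial ℂ := (Hc n).comp (C γ * X)

lemma HH_zero (γ : ℂ) : HH γ 0 = 1 := by simp [HH, Hc_zero]

lemma HH_eval (γ : ℂ) (n : ℕ) (z : ℂ) : (HH γ n).eval z = (Hc n).eval (γ * z) := by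
  simp [HH, eval_comp]

lemma HH_succ (γ : ℂ) (n : ℕ) :
    HH γ (n+1) = 2 * C γ * X * HH γ n - 2 * (n : ℂ[X]) * HH γ (n-1) := by
  rw [HH, Hc_succ]
  simp only [sub_comp, mul_comp, X_comp, natCast_comp, ofNat_comp]
  rw [HH, HH]
  ring

lemma derivative_HH (γ : ℂ) (n : ℕ) :
    derivative (HH γ n) = C γ * (2 * (n : ℂ[X]) * HH γ (n-1)) := by
  rw [HH, derivative_comp, derivative_Hc]
  simp only [derivative_mul, derivative_C, derivative_X, mul_comp, natCast_comp, ofNat_comp]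
  rw [HH]
  ring

/-- The Gaussian-weighted integral of a polynomial. -/
def Ig (P : Polynomial ℂ) : ℂ := ∫ y : ℝ, P.eval (y:ℂ) * Complex.exp (-(y:ℂ)^2)

lemma integrable_aux (k : ℕ) : Integrable (fun y : ℝ => y ^ k * Real.exp (-(y^2))) := by
  have h : (-1 : ℝ) < k := lt_of_lt_of_le neg_one_lt_zero (by positivity)
  simpa [Real.rpow_natCast, neg_mul, one_mul] using
    integrable_rpow_mul_exp_neg_mul_sq (b := (1:ℝ)) one_pos h

lemma integrable_evalP (P : Polynomial ℂ) :
    Integrable (fun y : ℝ => P.eval (y:ℂ) * Complex.exp (-(y:ℂ)^2)) := by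
  have h : (fun y : ℝ => P.eval (y:ℂ) * Complex.exp (-(y:ℂ)^2)) = fun y : ℝ =>
      ∑ k ∈ Finset.range (P.natDegree + 1),
        P.coeff k * (((y ^ k * Real.exp (-(y^2)) : ℝ)) : ℂ) := by
    funext y
    rw [Polynomial.eval_eq_sum_range, Finset.sum_mul]
    refine Finset.sum_congr rfl fun k _ => ?_
    push_cast
    ring
  rw [h]
  exact integrable_finset_sum _ fun k _ => ((integrable_aux k).ofReal.const_mul _)

lemma Ig_add (P Q : Polynomial ℂ) : Ig (P + Q) = Ig P + Ig Q := by
  unfold Ig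
  simp only [eval_add, add_mul]
  exact integral_add (integrable_evalP P) (integrable_evalP Q)

lemma Ig_sub (P Q : Polynomial ℂ) : Ig (P - Q) = Ig P - Ig Q := by
  unfold Ig
  simp only [eval_sub, sub_mul]
  exact integral_sub (integrable_evalP P) (integrable_evalP Q)

lemma Ig_Cmul (a : ℂ) (P : Polynomial ℂ) : Ig (C a * P) = a * Ig P := by
  unfold Ig
  simp only [eval_mul, eval_C, mul_assoc]
  exact integral_const_mul a _

lemma Ig_one : Ig 1 = ((Real.sqrt Real.pi : ℝ) : ℂ) := by
  unfold Ig
  have h : ∀ y : ℝ, (1 : ℂ[X]).eval (y:ℂ) * Complex.exp (-(y:ℂ)^2)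
      = ((Real.exp (-1 * y^2) : ℝ) : ℂ) := by
    intro y; push_cast; simp
  simp_rw [h]
  have h2 : ∫ (y:ℝ), ((Real.exp (-1*y^2) : ℝ) : ℂ) = ((∫ y:ℝ, Real.exp (-1*y^2) : ℝ) : ℂ) :=
    integral_ofReal
  rw [h2, integral_gaussian]
  norm_num

lemma Ig_deriv (P : Polynomial ℂ) : Ig (derivative P) = 2 * Ig (X * P) := by
  have hder : ∀ y : ℝ, HasDerivAt (fun t : ℝ => P.eval (t:ℂ) * Complex.exp (-(t:ℂ)^2))
      (((derivative P - C 2 * (X * P)).eval (y:ℂ)) * Complex.exp (-(y:ℂ)^2)) y := by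
    intro y
    have h1 : HasDerivAt (fun z : ℂ => P.eval z * Complex.exp (-z^2))
        ((derivative P).eval (y:ℂ) * Complex.exp (-(y:ℂ)^2)
          + P.eval (y:ℂ) * (Complex.exp (-(y:ℂ)^2) * (-(2*(y:ℂ))))) (y:ℂ) := by
      have hp := P.hasDerivAt (y:ℂ)
      have he : HasDerivAt (fun z : ℂ => Complex.exp (-z^2))
          (Complex.exp (-(y:ℂ)^2) * (-(2*(y:ℂ)))) (y:ℂ) := by
        have h2 : HasDerivAt (fun z : ℂ => -z^2) (-(2*(y:ℂ))) (y:ℂ) := by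
          have h := ((hasDerivAt_pow 2 ((y:ℂ)))).neg; simp at h; exact h
        simpa [mul_comm] using h2.cexp
      exact hp.mul he
    have := h1.comp_ofReal
    convert this using 1
    simp only [eval_sub, eval_mul, eval_C, eval_X]
    ring
  have h0 : ∫ y : ℝ, ((derivative P - C 2 * (X * P)).eval (y:ℂ)) * Complex.exp (-(y:ℂ)^2) = 0 :=
    integral_eq_zero_of_hasDerivAt_of_integrable hder (integrable_evalP _) (integrable_evalP _)
  have h2 : Ig (derivative P - C 2 * (X * P)) = 0 := h0
  rw [Ig_sub, Ig_Cmul] at h2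
  linear_combination h2


/-- The two-index Hermite-Gaussian integral. -/
def Jg (α β : ℂ) (m n : ℕ) : ℂ := Ig (HH α m * HH β n)

lemma Jg_symm (α β : ℂ) (m n : ℕ) : Jg α β m n = Jg β α n m := by
  rw [Jg, Jg, mul_comm]

lemma Jg_zero (α β : ℂ) : Jg α β 0 0 = ((Real.sqrt Real.pi : ℝ) : ℂ) := by
  rw [Jg, HH_zero, HH_zero, mul_one, Ig_one]

lemma Jg_rec (α β : ℂ) (m n : ℕ) :
    Jg α β (m+1) n = 2*(m:ℂ)*(α^2-1) * Jg α β (m-1) n + 2*(n:ℂ)*(α*β) * Jg α β m (n-1) := by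
  have e1 : HH α (m+1) * HH β n
      = C (2*α) * (X * (HH α m * HH β n)) - C (2*(m:ℂ)) * (HH α (m-1) * HH β n) := by
    rw [HH_succ]
    simp only [map_mul, map_ofNat, Polynomial.C_eq_natCast]
    ring
  have e2 : derivative (HH α m * HH β n)
      = C (2*(m:ℂ)*α) * (HH α (m-1) * HH β n) + C (2*(n:ℂ)*β) * (HH α m * HH β (n-1)) := by
    rw [derivative_mul, derivative_HH, derivative_HH]
    simp only [map_mul, map_ofNat, Polynomial.C_eq_natCast]
    ring
  have h := Ig_deriv (HH α m * HH β n)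
  rw [e2, Ig_add, Ig_Cmul, Ig_Cmul] at h
  have hJ : Jg α β (m+1) n
      = 2*α * Ig (X * (HH α m * HH β n)) - 2*(m:ℂ) * Ig (HH α (m-1) * HH β n) := by
    rw [Jg, e1, Ig_sub, Ig_Cmul, Ig_Cmul]
  simp only [Jg] at hJ ⊢
  linear_combination hJ - α * h

lemma Jg_antisym {α β : ℂ} (hc : α^2 + β^2 = 2) (n : ℕ) :
    Jg α β (n+2) n = - Jg α β n (n+2) := by
  induction n with
  | zero =>
    have hA := Jg_rec α β 1 0
    have hB := Jg_rec β α 1 0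
    rw [Jg_symm β α 2 0, Jg_symm β α 0 0] at hB
    norm_num at hA hB
    linear_combination hA + hB + 2*(Jg α β 0 0)*hc
  | succ n ih =>
    have hA := Jg_rec α β (n+1+1) (n+1)
    have hB := Jg_rec β α (n+1+1) (n+1)
    simp only [Nat.add_sub_cancel] at hA hB
    rw [show n+1+1 = n+2 from rfl, show n+2+1 = n+3 from rfl] at hA hB
    rw [Jg_symm β α (n+3) (n+1), Jg_symm β α (n+1) (n+1), Jg_symm β α (n+2) n] at hB
    push_cast at hA hB
    show Jg α β (n+3) (n+1) = - Jg α β (n+1) (n+3)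
    linear_combination hA + hB + 2*((n:ℂ)+2)*(Jg α β (n+1) (n+1))*hc
      + 2*((n:ℂ)+1)*α*β*ih

lemma Jg_diag {α β : ℂ} (hc : α^2 + β^2 = 2) (s : ℂ) (hs : s = α*β) (G : ℕ → ℂ)
    (hG0 : G 0 = ((Real.sqrt Real.pi : ℝ) : ℂ))
    (hG1 : G 1 = 2*s*((Real.sqrt Real.pi : ℝ) : ℂ))
    (hGrec : ∀ k:ℕ, G (k+2) = 2*(2*(k:ℂ)+3)*s*G (k+1) - 4*((k:ℂ)+1)^2*G k) :
    ∀ n, Jg α β n n = G n := by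
  have key : ∀ k, (Jg α β k k = G k) ∧ (Jg α β (k+1) (k+1) = G (k+1)) ∧
      ((1 - α^2) * Jg α β (k+2) k = s * G (k+1) - 2*((k:ℂ)+1)*G k) := by
    intro k
    induction k with
    | zero =>
      have hJ00 := Jg_zero α β
      refine ⟨by rw [hJ00, hG0], ?_, ?_⟩
      · have h11 := Jg_rec α β 0 1
        norm_num at h11
        linear_combination h11 + 2*α*β*hJ00 - hG1 - 2*((Real.sqrt Real.pi : ℝ) : ℂ)*hs
      · have hJ20 := Jg_rec α β 1 0
        norm_num at hJ20
        linear_combination (1-α^2)*hJ20 - 2*(α^2-1)^2*hJ00 - s*hG1 + 2*hG0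
          - 2*((Real.sqrt Real.pi : ℝ) : ℂ)*α^2*hc
          - 2*((Real.sqrt Real.pi : ℝ) : ℂ)*(s+α*β)*hs
    | succ k ih =>
      obtain ⟨h0, h1, h2⟩ := ih
      have hrec := Jg_rec α β (k+1) (k+1+1)
      have hanti := Jg_antisym hc k
      simp only [Nat.add_sub_cancel] at hrec
      rw [show k+1+1 = k+2 from rfl] at hrec
      push_cast at hrec
      have new2 : Jg α β (k+2) (k+2) = G (k+2) := by
        linear_combination hrec + 2*((k:ℂ)+1)*(α^2-1)*hanti + 2*((k:ℂ)+1)*h2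
          + 2*((k:ℂ)+2)*α*β*h1 - 2*((k:ℂ)+2)*(G (k+1))*hs - (hGrec k)
      refine ⟨h1, ?_, ?_⟩
      · rw [show k+1+1 = k+2 from rfl]
        exact new2
      have hrec2 := Jg_rec α β (k+1+1) (k+1)
      simp only [Nat.add_sub_cancel] at hrec2
      rw [show k+1+1 = k+2 from rfl, show k+2+1 = k+3 from rfl] at hrec2
      push_cast at hrec2
      rw [show k+1+2 = k+3 from rfl, show k+1+1 = k+2 from rfl]
      push_cast
      linear_combination (1-α^2)*hrec2 + 2*((k:ℂ)+1)*α*β*h2 - 2*((k:ℂ)+2)*(α^2-1)^2*h1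
        - s*(hGrec k) - 2*((k:ℂ)+1)*s*(G (k+1))*hs + 4*((k:ℂ)+1)^2*(G k)*hs
        - 2*((k:ℂ)+2)*(G (k+1))*α^2*hc - 2*((k:ℂ)+2)*(G (k+1))*(s+α*β)*hs
  intro n
  exact (key n).1


/-! ### Legendre polynomials: Bonnet recurrence from Rodrigues formula -/

def uL (n : ℕ) : Polynomial ℝ := (X^2 - 1)^n
def pL (n : ℕ) : Polynomial ℝ := derivative^[n] (uL n)

lemma Cdecomp (a b : ℝ) : C (a*b) = C a * C b := map_mul C a b

lemma pL_zero : pL 0 = 1 := by simp [pL, uL]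

lemma pL_one : pL 1 = 2*X := by
  simp only [pL, uL, pow_one, Function.iterate_one, derivative_sub, derivative_one,
    derivative_X_pow, map_ofNat, map_natCast, Nat.cast_ofNat]
  push_cast
  ring

lemma Lx (q : Polynomial ℝ) (k : ℕ) :
    derivative^[k+1] (X * q) = X * derivative^[k+1] q + ((k:Polynomial ℝ)+1) * derivative^[k] q := by
  induction k with
  | zero =>
    simp only [zero_add, Function.iterate_one, Function.iterate_zero_apply, derivative_mul,
      derivative_X, Nat.cast_zero, one_mul]
    ring
  | succ k ih =>
    rw [Function.iterate_succ_apply' derivative (k+1) (X*q), ih]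
    rw [derivative_add, derivative_mul, derivative_mul, derivative_X]
    rw [← Function.iterate_succ_apply' derivative (k+1) q,
        ← Function.iterate_succ_apply' derivative k q]
    simp only [derivative_add, derivative_natCast, derivative_one]
    push_cast
    ring

lemma uL_deriv (n : ℕ) : derivative (uL (n+1)) = 2*((n:Polynomial ℝ)+1) * (X * uL n) := by
  rw [uL, derivative_pow]
  simp only [derivative_sub, derivative_one, derivative_X_pow, Nat.add_sub_cancel,
    map_natCast, map_ofNat, sub_zero]
  rw [uL]
  push_cast
  ring

lemma E1L (k : ℕ) : pL (k+2) = 2*((k:Polynomial ℝ)+2) * (X * pL (k+1))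
    + 2*((k:Polynomial ℝ)+2)*((k:Polynomial ℝ)+1) * derivative^[k] (uL (k+1)) := by
  have h1 : pL (k+2) = derivative^[k+1+1] (uL (k+1+1)) := rfl
  have hc : (2*((k:Polynomial ℝ)+2)) = C (2*((k:ℝ)+2)) := by
    simp only [map_mul, map_add, map_ofNat, map_natCast]
  rw [h1, Function.iterate_succ_apply derivative (k+1) (uL (k+1+1)), uL_deriv (k+1)]
  push_cast
  rw [show ((2:Polynomial ℝ)*((k:Polynomial ℝ)+1+1)) = C (2*((k:ℝ)+2)) by
    simp only [map_mul, map_add, map_ofNat, map_natCast, map_one]; push_cast; ring]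
  rw [iterate_derivative_C_mul, Lx (uL (k+1)) k]
  rw [show derivative^[k+1] (uL (k+1)) = pL (k+1) from rfl]
  simp only [map_mul, map_add, map_ofNat, map_natCast, map_one]
  push_cast
  ring

lemma FL (k : ℕ) : (X^2-1) * derivative (pL (k+1))
    = ((k:Polynomial ℝ)+1)*((k:Polynomial ℝ)+2) * derivative^[k] (uL (k+1)) := by
  cases k with
  | zero =>
    rw [pL_one]
    simp only [Function.iterate_zero_apply, uL, pow_one]
    simp only [derivative_mul, derivative_ofNat, derivative_X, Nat.cast_zero]
    ring
  | succ j =>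
    have hstart : (X^2-1) * derivative (uL (j+1+1)) = C (2*((j:ℝ)+2)) * (X * uL (j+2)) := by
      rw [uL_deriv (j+1), uL, uL, pow_succ]
      push_cast
      rw [show ((2:Polynomial ℝ)*((j:Polynomial ℝ)+1+1)) = C (2*((j:ℝ)+2)) by
        simp only [map_mul, map_add, map_ofNat, map_natCast, map_one]; push_cast; ring]
      ring
    have e0 : (X^2-1) * derivative (uL (j+1+1)) =
        X * (X * derivative (uL (j+2))) - derivative (uL (j+2)) := by
      rw [show j+1+1 = j+2 from rfl]; ring
    have h := congrArg (derivative^[j+2]) hstart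
    rw [e0] at h
    have lx1 := Lx (X * derivative (uL (j+2))) (j+1)
    have lx2 := Lx (derivative (uL (j+2))) (j+1)
    have lx3 := Lx (derivative (uL (j+2))) j
    rw [show j+1+1 = j+2 from rfl] at lx1 lx2
    have c2 : derivative^[j+1] (derivative (uL (j+2))) = pL (j+2) := by
      rw [← Function.iterate_succ_apply derivative (j+1) (uL (j+2))]; rfl
    have c3 : derivative^[j] (derivative (uL (j+2))) = derivative^[j+1] (uL (j+2)) := by
      rw [← Function.iterate_succ_apply derivative j (uL (j+2))]
    have c1 : derivative^[j+2] (derivative (uL (j+2))) = derivative (pL (j+2)) := by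
      rw [← Function.iterate_succ_apply derivative (j+2) (uL (j+2)),
        Function.iterate_succ_apply' derivative (j+2) (uL (j+2))]; rfl
    rw [Polynomial.iterate_derivative_sub, lx1, lx2, lx3, c1, c2, c3,
      iterate_derivative_C_mul, Lx (uL (j+2)) (j+1)] at h
    rw [show derivative^[j+1+1] (uL (j+2)) = pL (j+2) from rfl] at h
    rw [show j+1+1 = j+2 from rfl]
    simp only [map_mul, map_add, map_ofNat, map_natCast, map_one] at h ⊢
    push_cast at h ⊢
    linear_combination h


lemma GLr (k : ℕ) : pL (k+1) = 2*((k:Polynomial ℝ)+1) * (X * pL k)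
    + 2 * ((X^2-1) * derivative (pL k)) := by
  cases k with
  | zero =>
    rw [pL_one, pL_zero]
    simp only [derivative_one, Nat.cast_zero]
    ring
  | succ j =>
    have h1 := E1L j
    have h2 := FL j
    push_cast at h1 h2 ⊢
    linear_combination h1 - 2*h2

lemma pL_two : pL 2 = 12*X^2 - 4 := by
  have h := GLr 1
  rw [pL_one] at h
  rw [h]
  simp only [derivative_mul, derivative_ofNat, derivative_X, Nat.cast_one]
  ring

lemma RL : ∀ k : ℕ, (X^2-1) * derivative (pL (k+1))
    = ((k:Polynomial ℝ)+1)*(X*pL (k+1)) - 2*((k:Polynomial ℝ)+1)^2 * pL k := by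
  have main : ∀ k : ℕ, ((X^2-1) * derivative (pL (k+1))
      = ((k:Polynomial ℝ)+1)*(X*pL (k+1)) - 2*((k:Polynomial ℝ)+1)^2 * pL k) ∧
      ((X^2-1) * derivative (pL (k+2))
      = ((k:Polynomial ℝ)+2)*(X*pL (k+2)) - 2*((k:Polynomial ℝ)+2)^2 * pL (k+1)) := by
    intro k
    induction k with
    | zero =>
      constructor
      · rw [pL_one, pL_zero]
        simp only [derivative_mul, derivative_ofNat, derivative_X, Nat.cast_zero]
        ring
      · rw [pL_two, pL_one]
        simp only [derivative_sub, derivative_mul, derivative_ofNat, derivative_X,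
          derivative_X_pow, Nat.cast_zero, map_natCast, Nat.cast_ofNat, map_ofNat]
        push_cast
        ring
    | succ k ih =>
      obtain ⟨hk, hk1⟩ := ih
      refine ⟨by push_cast; linear_combination hk1, ?_⟩
      have hG1 := GLr (k+1)
      have hG2 := GLr (k+2)
      have hk1' := congrArg derivative hk1
      have hG2' := congrArg derivative hG2
      simp only [derivative_mul, derivative_sub, derivative_add, derivative_X,
        derivative_X_pow, derivative_one, derivative_ofNat, derivative_natCast,
        derivative_pow, map_natCast, Nat.cast_ofNat, map_ofNat, mul_zero, zero_mul,
        add_zero, zero_add] at hk1' hG2'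
      push_cast at hG1 hG2 hk1 hk1' hG2' ⊢
      simp only [show k+1+1 = k+2 from rfl, show k+2+1 = k+3 from rfl,
        show k+1+2 = k+3 from rfl] at hG1 hG2 hk1' hG2' ⊢
      linear_combination (X^2-1)*hG2' + 2*(X^2-1)*hk1' + (2*(k:Polynomial ℝ)+4)*X*hk1
        - ((k:Polynomial ℝ)+3)*X*hG2 + 2*((k:Polynomial ℝ)+2)^2*hG1
  exact fun k => (main k).1

lemma pL_bonnet (k : ℕ) : pL (k+2) = 2*(2*(k:Polynomial ℝ)+3)*(X*pL (k+1))
    - 4*((k:Polynomial ℝ)+1)^2 * pL k := by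
  have h1 := GLr (k+1)
  have h2 := RL k
  push_cast at h1 h2 ⊢
  linear_combination h1 + 2*h2

lemma legendreP_eval (n : ℕ) (x : ℝ) :
    (legendreP n).eval x = (2 ^ n * n.factorial : ℝ)⁻¹ * (pL n).eval x := by
  simp [legendreP, pL, uL]

lemma legendreP_zero_eval (x : ℝ) : (legendreP 0).eval x = 1 := by
  simp [legendreP]

lemma legendreP_one_eval (x : ℝ) : (legendreP 1).eval x = x := by
  rw [legendreP_eval, pL_one]
  simp [Nat.factorial]

lemma legendre_bonnet (k : ℕ) (x : ℝ) :
    ((k:ℝ)+2) * (legendreP (k+2)).eval x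
      = (2*(k:ℝ)+3)*x*((legendreP (k+1)).eval x) - ((k:ℝ)+1)*((legendreP k).eval x) := by
  have hB := congrArg (Polynomial.eval x) (pL_bonnet k)
  simp only [eval_mul, eval_sub, eval_add, eval_X, eval_pow, eval_ofNat, eval_natCast,
    eval_one] at hB
  rw [legendreP_eval, legendreP_eval, legendreP_eval, hB]
  have h2 : (2:ℝ)^k ≠ 0 := by positivity
  have hf : (k.factorial : ℝ) ≠ 0 := by
    exact_mod_cast Nat.factorial_ne_zero k
  have h3 : ((k:ℝ)+1) ≠ 0 := by positivity
  have h4 : ((k:ℝ)+2) ≠ 0 := by positivity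
  rw [show k+1+1 = k+2 from rfl, Nat.factorial_succ (k+1), Nat.factorial_succ k]
  push_cast
  field_simp
  ring


lemma aeval_Hc (n : ℕ) (z : ℂ) : Polynomial.aeval z (physHermite n) = (Hc n).eval z := by
  rw [Hc, eval_map, aeval_def, algebraMap_int_eq]

lemma conj_Hc_eval (n : ℕ) (z : ℂ) :
    (starRingEnd ℂ) ((Hc n).eval z) = (Hc n).eval ((starRingEnd ℂ) z) := by
  rw [Hc, eval_map, eval_map, Polynomial.hom_eval₂]
  congr 1
  exact RingHom.ext_int _ _


/-- `‖φ_n^{(θ)}‖² = P_n(1/cos θ)/√(cos θ)` with the normalization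
`N^{(θ)} = (Ω/π)^{1/4} e^{iθ/4}`. -/
theorem stmt8 (Ω θ : ℝ) (hΩ : 0 < Ω) (hθ : |θ| < Real.pi / 2) (hθ0 : θ ≠ 0) (n : ℕ) :
    (∫ x : ℝ, ‖phiN Ω θ (((Ω / Real.pi) ^ ((1:ℝ)/4) : ℝ) * Complex.exp (Complex.I * θ / 4)) n x‖ ^ 2)
      = (legendreP n).eval (Real.cos θ)⁻¹ / Real.sqrt (Real.cos θ) := by
  obtain ⟨hθ1, hθ2⟩ := abs_lt.mp hθ
  have hπ : 0 < Real.pi := Real.pi_pos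
  have hcos : 0 < Real.cos θ := Real.cos_pos_of_mem_Ioo ⟨hθ1, hθ2⟩
  set c : ℝ := Ω * Real.cos θ with hc
  have hcpos : 0 < c := mul_pos hΩ hcos
  set α₀ : ℂ := Complex.exp (Complex.I * θ / 2) / ((Real.sqrt (Real.cos θ) : ℝ) : ℂ) with hα
  set β₀ : ℂ := Complex.exp (-(Complex.I * θ / 2)) / ((Real.sqrt (Real.cos θ) : ℝ) : ℂ) with hβ
  have hsqcos_pos : 0 < Real.sqrt (Real.cos θ) := Real.sqrt_pos.mpr hcos
  have hsqcosC : ((Real.sqrt (Real.cos θ) : ℝ) : ℂ) ≠ 0 := by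
    exact_mod_cast hsqcos_pos.ne'
  have hsqsq : ((Real.sqrt (Real.cos θ) : ℝ) : ℂ) * ((Real.sqrt (Real.cos θ) : ℝ) : ℂ)
      = ((Real.cos θ : ℝ) : ℂ) := by
    rw [← Complex.ofReal_mul, Real.mul_self_sqrt hcos.le]
  have hcosC : ((Real.cos θ : ℝ) : ℂ) ≠ 0 := by exact_mod_cast hcos.ne'
  have hexp1 : Complex.exp (Complex.I * θ / 2) * Complex.exp (Complex.I * θ / 2)
      = Complex.exp (↑θ * Complex.I) := by
    rw [← Complex.exp_add]; ring_nf
  have hexp2 : Complex.exp (-(Complex.I * θ / 2)) * Complex.exp (-(Complex.I * θ / 2))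
      = Complex.exp (-↑θ * Complex.I) := by
    rw [← Complex.exp_add]; ring_nf
  have hcos2 : Complex.exp (↑θ * Complex.I) + Complex.exp (-↑θ * Complex.I)
      = 2 * ((Real.cos θ : ℝ) : ℂ) := by
    rw [Complex.ofReal_cos, Complex.cos]; ring
  have hconstraint : α₀^2 + β₀^2 = 2 := by
    rw [hα, hβ, div_pow, div_pow, ← add_div, pow_two, pow_two, pow_two, hexp1, hexp2,
      hsqsq, hcos2, mul_div_assoc, div_self hcosC, mul_one]
  have hs : ((((Real.cos θ)⁻¹ : ℝ)) : ℂ) = α₀ * β₀ := by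
    rw [hα, hβ, div_mul_div_comm, ← Complex.exp_add, hsqsq]
    rw [show Complex.I * ↑θ / 2 + -(Complex.I * ↑θ / 2) = 0 by ring, Complex.exp_zero]
    rw [Complex.ofReal_inv]
    exact (one_div _).symm
  have hconjα : (starRingEnd ℂ) α₀ = β₀ := by
    rw [hα, hβ, map_div₀, ← Complex.exp_conj, Complex.conj_ofReal]
    congr 1
    simp only [map_div₀, map_mul, Complex.conj_I, Complex.conj_ofReal, map_ofNat]
    ring
  set K : ℝ := Real.sqrt (Ω / Real.pi) / (2^n * n.factorial) with hK
  set gr : ℝ → ℝ := fun y => ‖(Hc n).eval (α₀ * (y:ℂ))‖^2 * Real.exp (-(y^2)) with hgr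
  -- pointwise identity
  have hpoint : ∀ x : ℝ,
      ‖phiN Ω θ (((Ω / Real.pi) ^ ((1:ℝ)/4) : ℝ) * Complex.exp (Complex.I * θ / 4)) n x‖ ^ 2
        = K * gr (Real.sqrt c * x) := by
    intro x
    have hfact_pos : (0:ℝ) < 2^n * n.factorial := by positivity
    rw [phiN]
    rw [norm_mul, norm_mul, mul_pow, mul_pow]
    have hn1 : ‖(((Ω / Real.pi) ^ ((1:ℝ)/4) : ℝ) : ℂ) * Complex.exp (Complex.I * θ / 4) /
        ((Real.sqrt (2 ^ n * n.factorial) : ℝ) : ℂ)‖^2 = K := by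
      rw [norm_div, norm_mul]
      rw [show Complex.I * ↑θ / 4 = ↑(θ/4) * Complex.I by push_cast; ring]
      rw [Complex.norm_exp_ofReal_mul_I, Complex.norm_real, Complex.norm_real,
        Real.norm_eq_abs, Real.norm_eq_abs]
      rw [_root_.abs_of_nonneg (Real.rpow_nonneg (by positivity) _),
        _root_.abs_of_nonneg (Real.sqrt_nonneg _), mul_one]
      rw [div_pow, Real.sq_sqrt hfact_pos.le]
      rw [← Real.rpow_natCast ((Ω / Real.pi) ^ ((1:ℝ)/4)) 2, ← Real.rpow_mul (by positivity)]
      rw [hK, Real.sqrt_eq_rpow]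
      norm_num
    have hn3 : ‖Complex.exp (-(1/2) * Ω * Complex.exp (Complex.I * θ) * (x:ℂ) ^ 2)‖^2
        = Real.exp (-((Real.sqrt c * x)^2)) := by
      rw [Complex.norm_exp]
      rw [show (-(1/2) * (Ω:ℂ) * Complex.exp (Complex.I * ↑θ) * (x:ℂ) ^ 2)
          = ((-(1/2) * Ω * x^2 : ℝ) : ℂ) * Complex.exp (↑θ * Complex.I) by
        rw [mul_comm Complex.I (θ:ℂ)]; push_cast; ring]
      rw [Complex.re_ofReal_mul, Complex.exp_ofReal_mul_I_re]
      rw [pow_two, ← Real.exp_add, mul_pow, Real.sq_sqrt hcpos.le, hc]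
      congr 1
      ring
    have hz : α₀ * ((Real.sqrt c * x : ℝ) : ℂ)
        = Complex.exp (Complex.I * θ / 2) * (Real.sqrt Ω : ℂ) * (x:ℂ) := by
      rw [hα, hc, Complex.ofReal_mul]
      rw [show ((Real.sqrt (Ω * Real.cos θ) : ℝ) : ℂ)
          = ((Real.sqrt Ω : ℝ):ℂ) * ((Real.sqrt (Real.cos θ) : ℝ):ℂ) by
        rw [← Complex.ofReal_mul, Real.sqrt_mul hΩ.le]]
      push_cast
      field_simp
    have hn2 : ‖Polynomial.aeval (Complex.exp (Complex.I * θ / 2) * (Real.sqrt Ω : ℂ) * (x:ℂ))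
        (physHermite n)‖^2 = ‖(Hc n).eval (α₀ * ((Real.sqrt c * x : ℝ):ℂ))‖^2 := by
      rw [aeval_Hc, hz]
    rw [hn1, hn3, hn2, hgr]
    ring
  have hint1 : (∫ x : ℝ,
      ‖phiN Ω θ (((Ω / Real.pi) ^ ((1:ℝ)/4) : ℝ) * Complex.exp (Complex.I * θ / 4)) n x‖ ^ 2)
      = K * ((Real.sqrt c)⁻¹ * ∫ y, gr y) := by
    rw [show (fun x : ℝ =>
        ‖phiN Ω θ (((Ω / Real.pi) ^ ((1:ℝ)/4) : ℝ) * Complex.exp (Complex.I * θ / 4)) n x‖ ^ 2)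
        = fun x => K * gr (Real.sqrt c * x) from funext hpoint]
    rw [integral_const_mul, Measure.integral_comp_mul_left gr (Real.sqrt c)]
    rw [_root_.abs_of_nonneg (inv_nonneg.mpr (Real.sqrt_nonneg c)), smul_eq_mul]
  -- identify the Gaussian integral with Jg
  have hgr_int : (((∫ y, gr y) : ℝ) : ℂ) = Jg α₀ β₀ n n := by
    rw [Jg, Ig]
    rw [show (fun y : ℝ => (HH α₀ n * HH β₀ n).eval (y:ℂ) * Complex.exp (-(y:ℂ)^2))
        = fun y : ℝ => ((gr y : ℝ) : ℂ) from ?_]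
    · have h2 : ∫ (y:ℝ), ((gr y : ℝ):ℂ) = ((∫ y, gr y : ℝ):ℂ) := integral_ofReal
      rw [h2]
    funext y
    rw [eval_mul, HH_eval, HH_eval]
    have hby : β₀ * (y:ℂ) = (starRingEnd ℂ) (α₀ * (y:ℂ)) := by
      rw [map_mul, hconjα, Complex.conj_ofReal]
    rw [hby, ← conj_Hc_eval, Complex.mul_conj]
    rw [hgr]
    push_cast [Complex.normSq_eq_norm_sq]
    ring
  -- Legendre value of the diagonal integral
  have hJg : Jg α₀ β₀ n n = (((Real.sqrt Real.pi) : ℝ):ℂ) * 2^n * (n.factorial:ℂ)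
      * ((((legendreP n).eval ((Real.cos θ)⁻¹)) : ℝ):ℂ) := by
    refine Jg_diag hconstraint ((((Real.cos θ)⁻¹ : ℝ)) : ℂ) hs
      (fun k => (((Real.sqrt Real.pi) : ℝ):ℂ) * 2^k * (k.factorial:ℂ)
        * ((((legendreP k).eval ((Real.cos θ)⁻¹)) : ℝ):ℂ)) ?_ ?_ ?_ n
    · simp [legendreP_zero_eval]
    · rw [legendreP_one_eval]
      push_cast [Nat.factorial_one]
      ring
    · intro k
      have hb := legendre_bonnet k ((Real.cos θ)⁻¹)
      have hbC : ((k:ℂ)+2) * ((((legendreP (k+2)).eval ((Real.cos θ)⁻¹)) : ℝ):ℂ)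
          = (2*(k:ℂ)+3)*(((Real.cos θ)⁻¹ : ℝ) : ℂ)*((((legendreP (k+1)).eval ((Real.cos θ)⁻¹)) : ℝ):ℂ)
            - ((k:ℂ)+1)*((((legendreP k).eval ((Real.cos θ)⁻¹)) : ℝ):ℂ) := by
        exact_mod_cast hb
      have hf2 : (k+2).factorial = (k+2) * (k+1).factorial := Nat.factorial_succ (k+1)
      rw [hf2, Nat.factorial_succ k]
      push_cast at hbC ⊢
      linear_combination ((((Real.sqrt Real.pi) : ℝ):ℂ) * 2^(k+2) * ((k:ℂ)+1)
        * (k.factorial:ℂ)) * hbC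
  have hgr_val : (∫ y, gr y)
      = Real.sqrt Real.pi * 2^n * n.factorial * (legendreP n).eval ((Real.cos θ)⁻¹) := by
    have h := hgr_int.trans hJg
    exact_mod_cast h
  rw [hint1, hgr_val, hK, hc]
  have h2n : (2:ℝ)^n ≠ 0 := by positivity
  have hfn : ((n.factorial : ℕ) : ℝ) ≠ 0 := by exact_mod_cast Nat.factorial_ne_zero n
  have hsπ : Real.sqrt Real.pi ≠ 0 := by positivity
  have hsΩ : Real.sqrt Ω ≠ 0 := by positivity
  have hsc : Real.sqrt (Real.cos θ) ≠ 0 := hsqcos_pos.ne'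
  rw [Real.sqrt_mul hΩ.le, show Real.sqrt (Ω / Real.pi) = Real.sqrt Ω / Real.sqrt Real.pi from
    Real.sqrt_div hΩ.le Real.pi]
  field_simp
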